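/- arXiv:2402.18377 — 2 statements merged into one kernel-verified Lean document; each statement's English description precedes it below -/
import Mathlib

section
/- Let ψ_1, …, ψ_m : ℝⁿ → ℝ be continuous, let x : ℝ → ℝⁿ be continuous, let T > 0, and define Ψ_k : [0, T] → ℝ by Ψ_k(t) = ∫_0^t ψ_k(x(s)) ds for k = 1, …, m. Let G ∈ ℝ^{m×m} be the Gram matrix with entries G_{ki} = ∫_0^T Ψ_k(t) Ψ_i(t) dt. Then G has a nontrivial kernel (equivalently, G is not invertible) if and only if there exists θ ∈ ℝᵐ with θ ≠ 0 such that Σ_{i=1}^m θ_i ψ_i(x(t)) = 0 for all t ∈ [0, T]. -/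
open MeasureTheory

/-- If the primitive of a continuous function vanishes on `[0,T]`, so does the function. -/
lemma aux_primitive_zero {f : ℝ → ℝ} (hf : Continuous f) {T : ℝ} (hT : 0 < T)
    (h : ∀ t ∈ Set.Icc (0:ℝ) T, (∫ s in (0:ℝ)..t, f s) = 0) :
    ∀ t ∈ Set.Icc (0:ℝ) T, f t = 0 := by
  have hIoo : ∀ t ∈ Set.Ioo (0:ℝ) T, f t = 0 := by
    intro t ht
    have hd : HasDerivAt (fun u => ∫ s in (0:ℝ)..u, f s) (f t) t :=
      intervalIntegral.integral_hasDerivAt_right (hf.intervalIntegrable _ _)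
        (hf.stronglyMeasurableAtFilter _ _) hf.continuousAt
    have hev : (fun _ : ℝ => (0:ℝ)) =ᶠ[nhds t] (fun u => ∫ s in (0:ℝ)..u, f s) := by
      filter_upwards [isOpen_Ioo.mem_nhds ht] with u hu
      exact (h u ⟨hu.1.le, hu.2.le⟩).symm
    have hd0 : HasDerivAt (fun _ : ℝ => (0:ℝ)) (f t) t := hd.congr_of_eventuallyEq hev
    have := hd0.unique (hasDerivAt_const t 0)
    linarith [this]
  have hcl : Set.EqOn f 0 (closure (Set.Ioo (0:ℝ) T)) :=
    Set.EqOn.closure (fun t ht => hIoo t ht) hf continuous_const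
  intro t ht
  have : t ∈ closure (Set.Ioo (0:ℝ) T) := by
    rwa [closure_Ioo hT.ne]
  exact hcl this

/-- Lemma 3: the Gram matrix of the integrated basis functions along a trajectory
has a nontrivial kernel iff the trajectory solves an algebraic equation in the
basis functions. -/
theorem gram_kernel_iff_algebraic_equation
    {m n : ℕ} (ψ : Fin m → (Fin n → ℝ) → ℝ) (hψ : ∀ i, Continuous (ψ i))
    (x : ℝ → Fin n → ℝ) (hx : Continuous x) (T : ℝ) (hT : 0 < T)
    (Ψ : Fin m → ℝ → ℝ) (hΨ : ∀ k t, Ψ k t = ∫ s in (0:ℝ)..t, ψ k (x s))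
    (G : Matrix (Fin m) (Fin m) ℝ)
    (hG : ∀ k i, G k i = ∫ t in (0:ℝ)..T, Ψ k t * Ψ i t) :
    (∃ θ : Fin m → ℝ, θ ≠ 0 ∧ G.mulVec θ = 0) ↔
      (∃ θ : Fin m → ℝ, θ ≠ 0 ∧ ∀ t ∈ Set.Icc (0:ℝ) T, (∑ i, θ i * ψ i (x t)) = 0) := by
  -- basic continuity facts
  have hψx : ∀ k, Continuous (fun s => ψ k (x s)) := fun k => (hψ k).comp hx
  have hΨc : ∀ k, Continuous (Ψ k) := by
    intro k
    have : Continuous (fun t => ∫ s in (0:ℝ)..t, ψ k (x s)) :=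
      intervalIntegral.continuous_primitive (fun a b => (hψx k).intervalIntegrable a b) 0
    simpa [funext (hΨ k)] using this
  constructor
  · rintro ⟨θ, hθ, hker⟩
    refine ⟨θ, hθ, ?_⟩
    set f : ℝ → ℝ := fun s => ∑ i, θ i * ψ i (x s) with hf
    have hfc : Continuous f := continuous_finset_sum _ fun i _ => continuous_const.mul (hψx i)
    set F : ℝ → ℝ := fun t => ∑ i, θ i * Ψ i t with hFdef
    have hFc : Continuous F := continuous_finset_sum _ fun i _ => continuous_const.mul (hΨc i)
    -- F is the primitive of f
    have hFint : ∀ t : ℝ, F t = ∫ s in (0:ℝ)..t, f s := by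
      intro t
      rw [hFdef]
      simp only
      rw [intervalIntegral.integral_finset_sum (f := fun i s => θ i * ψ i (x s)) (fun i _ =>
        (continuous_const.mul (hψx i)).intervalIntegrable 0 t)]
      refine Finset.sum_congr rfl fun i _ => ?_
      rw [hΨ i t, intervalIntegral.integral_const_mul]
    -- θ ⬝ G θ = ∫ F²
    have hquad : (∫ t in (0:ℝ)..T, F t ^ 2) = 0 := by
      have h1 : (∫ t in (0:ℝ)..T, F t ^ 2) = ∑ k, θ k * ∑ i, G k i * θ i := by
        have : ∀ t, F t ^ 2 = ∑ k, ∑ i, θ k * (Ψ k t * Ψ i t * θ i) := by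
          intro t
          rw [hFdef]
          simp only [sq, Finset.sum_mul_sum]
          refine Finset.sum_congr rfl fun k _ => Finset.sum_congr rfl fun i _ => by ring
        have hint : ∀ (k i : Fin m), IntervalIntegrable
            (fun t => θ k * (Ψ k t * Ψ i t * θ i)) volume 0 T := fun k i =>
          (continuous_const.mul (((hΨc k).mul (hΨc i)).mul
            continuous_const)).intervalIntegrable 0 T
        simp_rw [this]
        rw [intervalIntegral.integral_finset_sum
          (f := fun k t => ∑ i, θ k * (Ψ k t * Ψ i t * θ i)) (fun k _ =>
          (continuous_finset_sum _ fun i _ => continuous_const.mul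
            (((hΨc k).mul (hΨc i)).mul continuous_const)).intervalIntegrable 0 T)]
        refine Finset.sum_congr rfl fun k _ => ?_
        rw [intervalIntegral.integral_finset_sum (fun i _ => hint k i), Finset.mul_sum]
        refine Finset.sum_congr rfl fun i _ => ?_
        rw [hG k i, ← intervalIntegral.integral_mul_const,
          ← intervalIntegral.integral_const_mul]
      rw [h1]
      have : ∀ k, ∑ i, G k i * θ i = 0 := fun k => congrFun hker k
      simp [this]
    -- the primitive of F² is zero on [0,T]
    have hFsq : ∀ t ∈ Set.Icc (0:ℝ) T, (∫ s in (0:ℝ)..t, F s ^ 2) = 0 := by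
      intro t ht
      have h1 : (0:ℝ) ≤ ∫ s in (0:ℝ)..t, F s ^ 2 :=
        intervalIntegral.integral_nonneg ht.1 fun s _ => sq_nonneg _
      have h2 : (0:ℝ) ≤ ∫ s in t..T, F s ^ 2 :=
        intervalIntegral.integral_nonneg ht.2 fun s _ => sq_nonneg _
      have hadd : (∫ s in (0:ℝ)..t, F s ^ 2) + (∫ s in t..T, F s ^ 2)
          = ∫ s in (0:ℝ)..T, F s ^ 2 :=
        intervalIntegral.integral_add_adjacent_intervals
          ((hFc.pow 2).intervalIntegrable 0 t) ((hFc.pow 2).intervalIntegrable t T)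
      rw [hquad] at hadd
      linarith
    have hF0 : ∀ t ∈ Set.Icc (0:ℝ) T, F t = 0 := by
      intro t ht
      have := aux_primitive_zero (hFc.pow 2) hT hFsq t ht
      exact pow_eq_zero_iff (by norm_num) |>.mp this
    -- now F = primitive of f vanishes, so f vanishes
    have hFprim : ∀ t ∈ Set.Icc (0:ℝ) T, (∫ s in (0:ℝ)..t, f s) = 0 := by
      intro t ht
      rw [← hFint t]
      exact hF0 t ht
    exact aux_primitive_zero hfc hT hFprim
  · rintro ⟨θ, hθ, halg⟩
    refine ⟨θ, hθ, ?_⟩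
    set f : ℝ → ℝ := fun s => ∑ i, θ i * ψ i (x s) with hf
    set F : ℝ → ℝ := fun t => ∑ i, θ i * Ψ i t with hFdef
    have hFint : ∀ t : ℝ, F t = ∫ s in (0:ℝ)..t, f s := by
      intro t
      rw [hFdef]
      simp only
      rw [intervalIntegral.integral_finset_sum (f := fun i s => θ i * ψ i (x s)) (fun i _ =>
        (continuous_const.mul (hψx i)).intervalIntegrable 0 t)]
      refine Finset.sum_congr rfl fun i _ => ?_
      rw [hΨ i t, intervalIntegral.integral_const_mul]
    have hF0 : ∀ t ∈ Set.Icc (0:ℝ) T, F t = 0 := by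
      intro t ht
      rw [hFint t]
      rw [intervalIntegral.integral_congr (g := fun _ => (0:ℝ)) ?_]
      · simp
      · intro s hs
        rw [Set.uIcc_of_le ht.1] at hs
        exact halg s ⟨hs.1, le_trans hs.2 ht.2⟩
    funext k
    show ∑ i, G k i * θ i = 0
    have h1 : ∑ i, G k i * θ i = ∫ t in (0:ℝ)..T, Ψ k t * F t := by
      have : ∀ t, Ψ k t * F t = ∑ i, Ψ k t * Ψ i t * θ i := by
        intro t
        rw [hFdef]
        simp only [Finset.mul_sum]
        exact Finset.sum_congr rfl fun i _ => by ring
      simp_rw [this]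
      rw [intervalIntegral.integral_finset_sum (f := fun i t => Ψ k t * Ψ i t * θ i) (fun i _ =>
        (((hΨc k).mul (hΨc i)).mul continuous_const).intervalIntegrable 0 T)]
      refine Finset.sum_congr rfl fun i _ => ?_
      rw [hG k i, ← intervalIntegral.integral_mul_const]
    rw [h1]
    rw [intervalIntegral.integral_congr (g := fun _ => (0:ℝ)) ?_]
    · simp
    · intro t ht
      rw [Set.uIcc_of_le hT.le] at ht
      simp [hF0 t ht]
end

section
/- Let M be a metric space and let Φ, Φ_R : ℝ × M → M be two flows on M such that for each x ∈ M the orbit maps t ↦ Φ(t, x) and t ↦ Φ_R(t, x) are continuous. Let B_k, B_j ⊆ M be disjoint sets with B_k forward-invariant under Φ (i.e. Φ(t, x) ∈ B_k for all x ∈ B_k and t ≥ 0), and let U ⊆ M be an open set with U ⊆ B_j. Suppose x ∈ B_k and there exists T' ≥ 0 with Φ_R(T', x) ∈ U. Then there exists T > 0 such that ∫_0^T 1_U(Φ(s, x)) ds = 0 while ∫_0^T 1_U(Φ_R(s, x)) ds > 0; in particular, the occupation measures of the two flows starting at x up to time T disagree on the Borel set U. -/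
open MeasureTheory

/-- Central step of Theorem 1: if the reconstructed flow sends a point of the
forward-invariant basin `B_k` into an open set `U` inside a disjoint basin `B_j`,
while the true flow keeps it in `B_k`, then the occupation measures disagree on
`U` for some horizon `T > 0`. -/
theorem occupation_measures_disagree_of_basin_escape
    {M : Type*} [MetricSpace M] (Φ ΦR : ℝ → M → M)
    (hΦflow0 : ∀ x, Φ 0 x = x) (hΦflow : ∀ s t x, Φ (s + t) x = Φ s (Φ t x))
    (hΦRflow0 : ∀ x, ΦR 0 x = x) (hΦRflow : ∀ s t x, ΦR (s + t) x = ΦR s (ΦR t x))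
    (hΦcont : ∀ x, Continuous fun t => Φ t x)
    (hΦRcont : ∀ x, Continuous fun t => ΦR t x)
    (Bk Bj : Set M) (hdisj : Disjoint Bk Bj)
    (hBkinv : ∀ x ∈ Bk, ∀ t : ℝ, 0 ≤ t → Φ t x ∈ Bk)
    (U : Set M) (hU : IsOpen U) (hUBj : U ⊆ Bj)
    (x : M) (hx : x ∈ Bk) (T' : ℝ) (hT' : 0 ≤ T') (hesc : ΦR T' x ∈ U) :
    ∃ T : ℝ, 0 < T ∧
      (∫ s in (0:ℝ)..T, U.indicator (fun _ => (1:ℝ)) (Φ s x)) = 0 ∧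
      0 < ∫ s in (0:ℝ)..T, U.indicator (fun _ => (1:ℝ)) (ΦR s x) := by
  -- T' must be positive, else x ∈ U ⊆ Bj contradicts x ∈ Bk.
  have hT'pos : 0 < T' := by
    rcases lt_or_eq_of_le hT' with h | h
    · exact h
    · exfalso
      rw [← h, hΦRflow0] at hesc
      exact (hdisj.ne_of_mem hx (hUBj hesc)) rfl
  -- the preimage of U under the reconstructed orbit is open and contains T'
  have hVopen : IsOpen {s : ℝ | ΦR s x ∈ U} := hU.preimage (hΦRcont x)
  rcases Metric.isOpen_iff.1 hVopen T' hesc with ⟨δ, hδpos, hball⟩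
  set V : Set ℝ := {s : ℝ | ΦR s x ∈ U} with hV
  set ε : ℝ := min (δ / 2) (T' / 2) with hε
  have hεpos : 0 < ε := lt_min (by linarith) (by linarith)
  have hεδ : ε < δ := lt_of_le_of_lt (min_le_left _ _) (by linarith)
  have hεT' : ε ≤ T' / 2 := min_le_right _ _
  refine ⟨T' + ε, by linarith, ?_, ?_⟩
  · -- true flow never visits U
    have hzero : ∀ s ∈ Set.uIcc (0:ℝ) (T' + ε),
        U.indicator (fun _ => (1:ℝ)) (Φ s x) = 0 := by
      intro s hs
      rw [Set.uIcc_of_le (by linarith)] at hs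
      have hmem : Φ s x ∈ Bk := hBkinv x hx s hs.1
      have hnot : Φ s x ∉ U := fun h => hdisj.ne_of_mem hmem (hUBj h) rfl
      simp [Set.indicator_of_notMem hnot]
    rw [intervalIntegral.integral_congr hzero]
    simp
  · -- rewrite the integrand as the indicator of V ⊆ ℝ
    have hrw : (fun s : ℝ => U.indicator (fun _ => (1:ℝ)) (ΦR s x))
        = V.indicator (fun _ => (1:ℝ)) := by
      funext s
      by_cases h : ΦR s x ∈ U
      · simp [Set.indicator_apply, h, hV, Set.mem_setOf_eq]
      · simp [Set.indicator_apply, h, hV, Set.mem_setOf_eq]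
    have hgoal : 0 < ∫ s in (0:ℝ)..(T' + ε), V.indicator (fun _ => (1:ℝ)) s := by
      have hmeas : Measurable (V.indicator (fun _ => (1:ℝ))) :=
        measurable_const.indicator hVopen.measurableSet
      have hnonneg : ∀ s : ℝ, 0 ≤ V.indicator (fun _ => (1:ℝ)) s := fun s =>
        Set.indicator_nonneg (fun _ _ => zero_le_one) _
      have hle : ∀ s : ℝ, V.indicator (fun _ => (1:ℝ)) s ≤ 1 := fun s =>
        Set.indicator_le' (fun _ _ => le_refl 1) (fun _ _ => zero_le_one) s
      have hint : IntegrableOn (V.indicator (fun _ => (1:ℝ)))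
          (Set.Ioc (0:ℝ) (T' + ε)) := by
        apply Integrable.mono' (integrable_const (1:ℝ)) hmeas.aestronglyMeasurable
        filter_upwards with s
        rw [Real.norm_eq_abs, abs_of_nonneg (hnonneg s)]
        exact hle s
      have hsub : Set.Ioc (T' - ε) (T' + ε) ⊆ Set.Ioc (0:ℝ) (T' + ε) :=
        Set.Ioc_subset_Ioc (by linarith) le_rfl
      have hone : ∀ s ∈ Set.Ioc (T' - ε) (T' + ε),
          V.indicator (fun _ => (1:ℝ)) s = 1 := by
        intro s hs
        have hb : s ∈ Metric.ball T' δ := by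
          rw [Metric.mem_ball, Real.dist_eq, abs_lt]
          exact ⟨by linarith [hs.1, hεδ], by linarith [hs.2, hεδ]⟩
        exact Set.indicator_of_mem (hball hb) _
      have hmono : ∫ s in Set.Ioc (T' - ε) (T' + ε), V.indicator (fun _ => (1:ℝ)) s
          ≤ ∫ s in Set.Ioc (0:ℝ) (T' + ε), V.indicator (fun _ => (1:ℝ)) s := by
        apply setIntegral_mono_set hint
        · filter_upwards with s using hnonneg s
        · exact Filter.Eventually.of_forall hsub
      have hlower : (2 * ε : ℝ) ≤ ∫ s in Set.Ioc (T' - ε) (T' + ε),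
          V.indicator (fun _ => (1:ℝ)) s := by
        rw [setIntegral_congr_fun measurableSet_Ioc hone]
        rw [setIntegral_const, smul_eq_mul, mul_one, Measure.real, Real.volume_Ioc,
          ENNReal.toReal_ofReal (by linarith)]
        linarith
      rw [intervalIntegral.integral_of_le (by linarith)]
      calc (0:ℝ) < 2 * ε := by linarith
        _ ≤ _ := hlower
        _ ≤ _ := hmono
    rw [hrw]
    exact hgoal
end
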